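/- arXiv:2506.07307 — 3 statements merged into one kernel-verified Lean document; each statement's English description precedes it below -/
import Mathlib

section
/- Let α, ε, σ be real numbers with ε ≠ 0 and α ≠ 0, and let m ≥ 1 be a natural number. Suppose γ : ℝ → ℝ × ℝ is a global solution of the generalized Duffing system, i.e., γ is differentiable and γ'(t) = (γ₂(t), -α γ₂(t) - ε γ₁(t)^m - σ γ₁(t)) for all t ∈ ℝ, where γ = (γ₁, γ₂). If there exists T > 0 such that γ(t + T) = γ(t) for all t ∈ ℝ, then γ is constant. In particular, the system has no limit cycles when α ≠ 0. -/
/-!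
The energy `y ^ 2 / 2 + V x`, with `V' = ε x ^ m + σ x`, decays along solutions at the rate
`α y ^ 2`. Hence `α` times the energy is antitone; along a periodic solution it is also periodic,
so it is constant and its derivative `-(α y) ^ 2` vanishes. With `α ≠ 0` this forces `y = 0`,
and then `x' = y = 0` makes `x` constant as well.
-/

open Function

theorem Function.Periodic.eq_of_antitone {α β : Type*} [AddCommGroup α] [LinearOrder α]
    [IsOrderedAddMonoid α] [Archimedean α] [PartialOrder β] {f : α → β} {T : α}
    (hf : Periodic f T) (hT : 0 < T) (hanti : Antitone f) (a b : α) : f a = f b := by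
  wlog hab : a ≤ b generalizing a b
  · exact (this b a (le_of_not_ge hab)).symm
  obtain ⟨n, hn⟩ := Archimedean.arch (b - a) hT
  have hb : b ≤ a + n • T := sub_le_iff_le_add'.1 hn
  refine le_antisymm ?_ (hanti hab)
  calc f a = f (a + n • T) := ((hf.nsmul n) a).symm
    _ ≤ f b := hanti hb

theorem Function.Periodic.hasDerivAt_eq_zero_of_nonpos {f f' : ℝ → ℝ} {T : ℝ}
    (hf : Periodic f T) (hT : 0 < T) (hderiv : ∀ t, HasDerivAt f (f' t) t) (hf' : f' ≤ 0)
    (t : ℝ) : f' t = 0 := by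
  have hconst : f = fun _ ↦ f t :=
    funext fun s ↦ hf.eq_of_antitone hT (antitone_of_hasDerivAt_nonpos hderiv hf') s t
  rw [hconst] at hderiv
  exact (hderiv t).unique (hasDerivAt_const t (f t))

theorem hasDerivAt_dampedOscillator_energy {x y V g : ℝ → ℝ} {α t : ℝ}
    (hV : HasDerivAt V (g (x t)) (x t)) (hx : HasDerivAt x (y t) t)
    (hy : HasDerivAt y (-α * y t - g (x t)) t) :
    HasDerivAt (fun s ↦ y s ^ 2 / 2 + V (x s)) (-α * y t ^ 2) t := by
  refine (((hy.pow 2).div_const 2).add (hV.comp t hx)).congr_deriv ?_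
  ring

theorem hasDerivAt_duffingPotential (ε σ : ℝ) (m : ℕ) (u : ℝ) :
    HasDerivAt (fun u ↦ ε * u ^ (m + 1) / (m + 1) + σ * u ^ 2 / 2) (ε * u ^ m + σ * u) u := by
  refine ((((hasDerivAt_pow (m + 1) u).const_mul ε).div_const ((m : ℝ) + 1)).add
    (((hasDerivAt_pow 2 u).const_mul σ).div_const 2)).congr_deriv ?_
  push_cast
  field_simp

theorem dampedOscillator_periodic_eq {α T : ℝ} (hα : α ≠ 0) (hT : 0 < T) {V g : ℝ → ℝ}
    (hV : ∀ u, HasDerivAt V (g u) u) {γ : ℝ → ℝ × ℝ}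
    (hγ : ∀ t, HasDerivAt γ ((γ t).2, -α * (γ t).2 - g (γ t).1) t) (hper : Periodic γ T)
    (s t : ℝ) : γ s = γ t := by
  have hx (t : ℝ) : HasDerivAt (fun s ↦ (γ s).1) (γ t).2 t := (hγ t).fst
  have hy (t : ℝ) : HasDerivAt (fun s ↦ (γ s).2) (-α * (γ t).2 - g (γ t).1) t := (hγ t).snd
  have hE (t : ℝ) : HasDerivAt (fun s ↦ α * ((γ s).2 ^ 2 / 2 + V (γ s).1))
      (-(α * (γ t).2) ^ 2) t := by
    refine ((hasDerivAt_dampedOscillator_energy (x := fun s ↦ (γ s).1) (y := fun s ↦ (γ s).2)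
      (hV _) (hx t) (hy t)).const_mul α).congr_deriv ?_
    ring
  have hEper : Periodic (fun s ↦ α * ((γ s).2 ^ 2 / 2 + V (γ s).1)) T := fun s ↦ by
    simp only [hper s]
  have hy0 (t : ℝ) : (γ t).2 = 0 := by
    simpa [hα] using
      hEper.hasDerivAt_eq_zero_of_nonpos hT hE (fun t ↦ neg_nonpos.2 (sq_nonneg _)) t
  have hxconst := is_const_of_deriv_eq_zero (fun t ↦ (hx t).differentiableAt)
    (fun t ↦ (hx t).deriv.trans (hy0 t))
  exact Prod.ext (hxconst s t) ((hy0 s).trans (hy0 t).symm)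

theorem duffing_no_limit_cycles_general (α ε σ : ℝ) (hα : α ≠ 0)
    (m : ℕ) (γ : ℝ → ℝ × ℝ)
    (hγ : ∀ t : ℝ, HasDerivAt γ
      ((γ t).2, -α * (γ t).2 - ε * (γ t).1 ^ m - σ * (γ t).1) t)
    (T : ℝ) (hT : 0 < T) (hper : ∀ t : ℝ, γ (t + T) = γ t) :
    ∀ s t : ℝ, γ s = γ t := by
  refine dampedOscillator_periodic_eq hα hT (hasDerivAt_duffingPotential ε σ m)
    (fun t ↦ (hγ t).congr_deriv ?_) hper
  ext
  · rfl
  · simp only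
    ring

/-- The generalized Duffing system with `α ≠ 0` has no limit cycles: every
periodic global solution is constant (Bendixson criterion, since the divergence
of the vector field is `-α ≠ 0`). -/
theorem duffing_no_limit_cycles (α ε σ : ℝ) (hα : α ≠ 0) (hε : ε ≠ 0)
    (m : ℕ) (hm : 1 ≤ m) (γ : ℝ → ℝ × ℝ)
    (hγ : ∀ t : ℝ, HasDerivAt γ
      ((γ t).2, -α * (γ t).2 - ε * (γ t).1 ^ m - σ * (γ t).1) t)
    (T : ℝ) (hT : 0 < T) (hper : ∀ t : ℝ, γ (t + T) = γ t) :
    ∀ s t : ℝ, γ s = γ t :=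
  duffing_no_limit_cycles_general α ε σ hα m γ hγ T hT hper
end

section
/- Let ε, σ be real numbers with ε > 0 and σ > 0, and let m > 1 be an odd natural number. Then every global solution γ : ℝ → ℝ × ℝ of the system ẋ = y, ẏ = -εx^m - σx (i.e., γ differentiable with γ'(t) = (γ₂(t), -ε γ₁(t)^m - σ γ₁(t)) for all t) with γ(0) ≠ (0,0) is periodic: there exists T > 0 such that γ(t + T) = γ(t) for all t ∈ ℝ. That is, the origin is a global center. -/
/-!
The system is reversible: `(x, y, t) ↦ (x, -y, -t)` maps solutions to solutions, so by uniqueness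
a solution is symmetric in time about every instant `s` at which `y(s) = 0`, and two such
reflections about `s₁ < s₂` compose to the translation by `2 (s₂ - s₁)`. Such instants recur:
since `x (ε x^m + σ x) ≥ σ x²` for odd `m`, the angle `arctan (x / y)` increases at rate at least
`min 1 σ`, so it cannot stay in `(-π/2, π/2)` for a time longer than `π / min 1 σ`.
-/

open Set Real

section Reversible

variable {E : Type*} [NormedAddCommGroup E] [NormedSpace ℝ E] {v : E → E} {γ : ℝ → E}

theorem eq_of_hasDerivAt_of_locallyLipschitz (hv : LocallyLipschitz v) {δ : ℝ → E}
    (hγ : ∀ t, HasDerivAt γ (v (γ t)) t) (hδ : ∀ t, HasDerivAt δ (v (δ t)) t) {t₀ : ℝ}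
    (h₀ : γ t₀ = δ t₀) : γ = δ := by
  funext t
  obtain ⟨a, b, ht, ht₀⟩ : ∃ a b, t ∈ Ioo a b ∧ t₀ ∈ Ioo a b :=
    ⟨min t t₀ - 1, max t t₀ + 1, by constructor <;> constructor <;> grind⟩
  have hcont : ∀ {f : ℝ → E}, (∀ t, HasDerivAt f (v (f t)) t) → Continuous f :=
    fun hf => continuous_iff_continuousAt.2 fun t => (hf t).continuousAt
  set S := γ '' Icc a b ∪ δ '' Icc a b
  obtain ⟨K, hK⟩ := hv.locallyLipschitzOn.exists_lipschitzOnWith_of_compact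
    (((isCompact_Icc.image (hcont hγ)).union (isCompact_Icc.image (hcont hδ))) : IsCompact S)
  exact ODE_solution_unique_of_mem_Ioo (v := fun _ => v) (s := fun _ => S) (fun _ _ => hK) ht₀
    (fun s hs => ⟨hγ s, .inl (mem_image_of_mem _ (Ioo_subset_Icc_self hs))⟩)
    (fun s hs => ⟨hδ s, .inr (mem_image_of_mem _ (Ioo_subset_Icc_self hs))⟩) h₀ ht

theorem apply_two_mul_sub_eq_of_reversible (hv : LocallyLipschitz v) (ρ : E →L[ℝ] E)
    (hρv : ∀ p, v (ρ p) = -ρ (v p)) (hγ : ∀ t, HasDerivAt γ (v (γ t)) t) {s : ℝ}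
    (hs : ρ (γ s) = γ s) (t : ℝ) : ρ (γ (2 * s - t)) = γ t := by
  have hreflect : ∀ t, HasDerivAt (fun t => ρ (γ (2 * s - t))) (v (ρ (γ (2 * s - t)))) t := by
    intro t
    have := (ρ.hasFDerivAt.comp_hasDerivAt _ (hγ (2 * s - t))).scomp t
      ((hasDerivAt_id t).const_sub (2 * s))
    simpa [hρv, Function.comp_def] using this
  refine congrFun (eq_of_hasDerivAt_of_locallyLipschitz hv hreflect hγ (t₀ := s) ?_) t
  rwa [two_mul, add_sub_cancel_right]

theorem periodic_of_reversible (hv : LocallyLipschitz v) (ρ : E →L[ℝ] E)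
    (hρv : ∀ p, v (ρ p) = -ρ (v p)) (hγ : ∀ t, HasDerivAt γ (v (γ t)) t) {s₁ s₂ : ℝ}
    (hs₁ : ρ (γ s₁) = γ s₁) (hs₂ : ρ (γ s₂) = γ s₂) : Function.Periodic γ (2 * (s₂ - s₁)) := by
  intro t
  rw [← apply_two_mul_sub_eq_of_reversible hv ρ hρv hγ hs₂,
    ← apply_two_mul_sub_eq_of_reversible hv ρ hρv hγ hs₁ t]
  ring_nf

end Reversible

section

variable {E F : Type*} [NormedAddCommGroup E] [NormedSpace ℝ E] [NormedAddCommGroup F]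
  [NormedSpace ℝ F] {f : ℝ → E × F} {f' : E × F} {t : ℝ}

theorem HasDerivAt.fst (hf : HasDerivAt f f' t) : HasDerivAt (fun t => (f t).1) f'.1 t :=
  (ContinuousLinearMap.fst ℝ E F).hasFDerivAt.comp_hasDerivAt t hf

theorem HasDerivAt.snd (hf : HasDerivAt f f' t) : HasDerivAt (fun t => (f t).2) f'.2 t :=
  (ContinuousLinearMap.snd ℝ E F).hasFDerivAt.comp_hasDerivAt t hf

end

theorem exists_snd_eq_zero_of_clockwise_rate {γ γ' : ℝ → ℝ × ℝ} {a c : ℝ} (hc : 0 < c)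
    (hγ : ∀ t ∈ Icc a (a + π / c), HasDerivAt γ (γ' t) t)
    (hrate : ∀ t ∈ Icc a (a + π / c),
      c * ((γ t).1 ^ 2 + (γ t).2 ^ 2) ≤ (γ' t).1 * (γ t).2 - (γ t).1 * (γ' t).2) :
    ∃ s ∈ Icc a (a + π / c), (γ s).2 = 0 := by
  by_contra! hy
  set b := a + π / c
  have hab : a ≤ b := by simp only [b]; linarith [div_pos pi_pos hc]
  -- the angle of `γ t` measured clockwise from the `y`-axis, as long as `(γ t).2 ≠ 0`
  set θ : ℝ → ℝ := fun t => arctan ((γ t).1 / (γ t).2)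
  have hθ : ∀ t ∈ Icc a b, HasDerivAt θ
      (((γ' t).1 * (γ t).2 - (γ t).1 * (γ' t).2) / ((γ t).1 ^ 2 + (γ t).2 ^ 2)) t := by
    intro t ht
    have hyt := hy t ht
    refine ((hasDerivAt_arctan _).comp t ((hγ t ht).fst.div (hγ t ht).snd hyt)).congr_deriv ?_
    simp only [Pi.div_apply]
    field_simp
    ring
  have hθ_ge : ∀ t ∈ interior (Icc a b), c ≤ deriv θ t := by
    intro t ht
    rw [interior_Icc] at ht
    have ht' := Ioo_subset_Icc_self ht
    rw [(hθ t ht').deriv, le_div_iff₀ (by positivity [hy t ht'])]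
    exact hrate t ht'
  have hθ_diff : DifferentiableOn ℝ θ (Icc a b) :=
    fun t ht => (hθ t ht).differentiableAt.differentiableWithinAt
  have hθ_incr := (convex_Icc a b).mul_sub_le_image_sub_of_le_deriv hθ_diff.continuousOn
    (hθ_diff.mono interior_subset) hθ_ge a ⟨le_rfl, hab⟩ b ⟨hab, le_rfl⟩ hab
  rw [show c * (b - a) = π by simp only [b, add_sub_cancel_left]; field_simp] at hθ_incr
  linarith [arctan_lt_pi_div_two ((γ b).1 / (γ b).2), neg_pi_div_two_lt_arctan ((γ a).1 / (γ a).2)]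

namespace Duffing

def vectorField (ε σ : ℝ) (m : ℕ) (p : ℝ × ℝ) : ℝ × ℝ := (p.2, -ε * p.1 ^ m - σ * p.1)

def reflect : ℝ × ℝ →L[ℝ] ℝ × ℝ :=
  (ContinuousLinearMap.id ℝ ℝ).prodMap (-ContinuousLinearMap.id ℝ ℝ)

@[simp]
theorem reflect_apply (p : ℝ × ℝ) : reflect p = (p.1, -p.2) := rfl

theorem reflect_eq_self_iff {p : ℝ × ℝ} : reflect p = p ↔ p.2 = 0 := by
  simp [Prod.ext_iff, neg_eq_self]

variable {ε σ : ℝ} {m : ℕ}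

theorem vectorField_reflect (p : ℝ × ℝ) :
    vectorField ε σ m (reflect p) = -reflect (vectorField ε σ m p) := by
  simp [vectorField, sub_eq_add_neg]

theorem locallyLipschitz_vectorField : LocallyLipschitz (vectorField ε σ m) :=
  ContDiff.locallyLipschitz (𝕂 := ℝ) (by unfold vectorField; fun_prop)

theorem clockwise_rate_le (hε : 0 ≤ ε) (hodd : Odd m) (p : ℝ × ℝ) :
    min 1 σ * (p.1 ^ 2 + p.2 ^ 2) ≤
      (vectorField ε σ m p).1 * p.2 - p.1 * (vectorField ε σ m p).2 := by
  have hpow : 0 ≤ p.1 ^ (m + 1) := hodd.add_one.pow_nonneg _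
  have h1 : min 1 σ ≤ 1 := min_le_left _ _
  have h2 : min 1 σ ≤ σ := min_le_right _ _
  simp only [vectorField]
  nlinarith [sq_nonneg p.1, sq_nonneg p.2, mul_nonneg hε hpow, pow_succ p.1 m]

theorem exists_snd_eq_zero (hε : 0 ≤ ε) (hσ : 0 < σ) (hodd : Odd m) {γ : ℝ → ℝ × ℝ}
    (hγ : ∀ t, HasDerivAt γ (vectorField ε σ m (γ t)) t) (a : ℝ) :
    ∃ s ∈ Icc a (a + π / min 1 σ), (γ s).2 = 0 :=
  exists_snd_eq_zero_of_clockwise_rate (lt_min one_pos hσ) (fun t _ => hγ t)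
    (fun t _ => clockwise_rate_le hε hodd (γ t))

end Duffing

theorem duffing_global_center_odd_general (ε σ : ℝ) (hε : 0 < ε) (hσ : 0 < σ)
    (m : ℕ) (hodd : Odd m) (γ : ℝ → ℝ × ℝ)
    (hγ : ∀ t : ℝ, HasDerivAt γ
      ((γ t).2, -ε * (γ t).1 ^ m - σ * (γ t).1) t) :
    ∃ T : ℝ, 0 < T ∧ ∀ t : ℝ, γ (t + T) = γ t := by
  obtain ⟨s₁, -, hs₁⟩ := Duffing.exists_snd_eq_zero hε.le hσ hodd hγ 0
  obtain ⟨s₂, ⟨hs₁₂, -⟩, hs₂⟩ := Duffing.exists_snd_eq_zero hε.le hσ hodd hγ (s₁ + 1)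
  exact ⟨2 * (s₂ - s₁), by linarith,
    periodic_of_reversible Duffing.locallyLipschitz_vectorField Duffing.reflect
      Duffing.vectorField_reflect hγ (Duffing.reflect_eq_self_iff.2 hs₁)
      (Duffing.reflect_eq_self_iff.2 hs₂)⟩

/-- For odd `m > 1` with `ε, σ > 0`, the origin is a global center of the
undamped generalized Duffing system: every global solution not starting at the
origin is periodic. -/
theorem duffing_global_center_odd (ε σ : ℝ) (hε : 0 < ε) (hσ : 0 < σ)
    (m : ℕ) (hm : 1 < m) (hodd : Odd m) (γ : ℝ → ℝ × ℝ)
    (hγ : ∀ t : ℝ, HasDerivAt γ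
      ((γ t).2, -ε * (γ t).1 ^ m - σ * (γ t).1) t)
    (h0 : γ 0 ≠ (0, 0)) :
    ∃ T : ℝ, 0 < T ∧ ∀ t : ℝ, γ (t + T) = γ t :=
  duffing_global_center_odd_general ε σ hε hσ m hodd γ hγ
end

section
/- Let α, ε, σ be real numbers with ε ≠ 0, α = 0 and σ > 0, and let m > 1 be a natural number. Then there exists δ > 0 such that every global solution γ : ℝ → ℝ × ℝ of the system ẋ = y, ẏ = -εx^m - σx (i.e., γ differentiable with γ'(t) = (γ₂(t), -ε γ₁(t)^m - σ γ₁(t)) for all t) with 0 < ‖γ(0)‖ < δ is periodic, i.e., there exists T > 0 with γ(t + T) = γ(t) for all t ∈ ℝ. In other words, the origin is a center. -/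
/-!
The energy `y²/2 + σx²/2 + εx^(m+1)/(m+1)` is conserved and dominates `σx²/4` on a strip
`|x| ≤ r`, so solutions starting near the origin stay in that strip, where the force
`εx^m + σx` has the sign of `x`. There the velocity `y` cannot keep a sign forever, so it
vanishes at arbitrarily late times. The system is reversible: `(x, y) ↦ (x, -y)` together with
`t ↦ -t` maps solutions to solutions, so by uniqueness a solution is symmetric about every time
where `y = 0`, and two such symmetries at times `t₁ < t₂` compose to the translation by
`2 (t₂ - t₁)`.
-/

open Function Set
open scoped NNReal

lemma IsPreconnected.forall_pos_or_forall_neg {s : Set ℝ} (hs : IsPreconnected s) {u : ℝ → ℝ}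
    (hu : ContinuousOn u s) (hne : ∀ t ∈ s, u t ≠ 0) :
    (∀ t ∈ s, 0 < u t) ∨ ∀ t ∈ s, u t < 0 := by
  by_contra! ⟨⟨a, ha, hua⟩, ⟨b, hb, hub⟩⟩
  obtain ⟨c, hc, hc0⟩ := hs.intermediate_value ha hb hu ⟨hua, hub⟩
  exact hne c hc hc0

lemma mul_sub_le_sub_of_le_hasDerivAt {u u' : ℝ → ℝ} {C a b : ℝ}
    (hu : ∀ t, HasDerivAt u (u' t) t) (hC : ∀ t ≥ a, C ≤ u' t) (hab : a ≤ b) :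
    C * (b - a) ≤ u b - u a :=
  (convex_Ici a).mul_sub_le_image_sub_of_le_deriv
    (fun t _ => (hu t).continuousAt.continuousWithinAt)
    (fun t _ => (hu t).differentiableAt.differentiableWithinAt)
    (fun t ht => (hu t).deriv ▸ hC t (by rw [interior_Ici] at ht; exact ht.le))
    a self_mem_Ici b hab hab

lemma Function.periodic_of_reflect_eq {α : Type*} {R : α → α} (hR : Involutive R) {γ : ℝ → α}
    {a b : ℝ} (ha : ∀ t, γ (2 * a - t) = R (γ t)) (hb : ∀ t, γ (2 * b - t) = R (γ t)) :
    Periodic γ (2 * (b - a)) := fun t => by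
  rw [show t + 2 * (b - a) = 2 * b - (2 * a - t) by ring, hb, ha, hR]

def newtonField (f : ℝ → ℝ) (p : ℝ × ℝ) : ℝ × ℝ := (p.2, -f p.1)

def IsNewtonSolution (f : ℝ → ℝ) (γ : ℝ → ℝ × ℝ) : Prop :=
  ∀ t, HasDerivAt γ (newtonField f (γ t)) t

noncomputable def newtonEnergy (F : ℝ → ℝ) (p : ℝ × ℝ) : ℝ := p.2 ^ 2 / 2 + F p.1

lemma newtonField_lipschitzOnWith {f : ℝ → ℝ} {K : ℝ≥0} {S : Set ℝ}
    (hf : LipschitzOnWith K f S) :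
    LipschitzOnWith (max 1 K) (newtonField f) (Prod.fst ⁻¹' S) := by
  have := (LipschitzWith.prod_snd (α := ℝ) (β := ℝ)).lipschitzOnWith.prodMk
    (hf.comp LipschitzWith.prod_fst.lipschitzOnWith (mapsTo_preimage _ S)).neg
  rwa [mul_one] at this

namespace IsNewtonSolution

variable {f F : ℝ → ℝ} {γ : ℝ → ℝ × ℝ} {κ r : ℝ}

lemma hasDerivAt_fst (hγ : IsNewtonSolution f γ) (t : ℝ) :
    HasDerivAt (fun s => (γ s).1) (γ t).2 t :=
  (ContinuousLinearMap.fst ℝ ℝ ℝ).hasFDerivAt.comp_hasDerivAt t (hγ t)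

lemma hasDerivAt_snd (hγ : IsNewtonSolution f γ) (t : ℝ) :
    HasDerivAt (fun s => (γ s).2) (-f (γ t).1) t :=
  (ContinuousLinearMap.snd ℝ ℝ ℝ).hasFDerivAt.comp_hasDerivAt t (hγ t)

protected lemma continuous (hγ : IsNewtonSolution f γ) : Continuous γ :=
  continuous_iff_continuousAt.2 fun t => (hγ t).continuousAt

lemma energy_eq (hF : ∀ x, HasDerivAt F (f x) x) (hγ : IsNewtonSolution f γ) (t : ℝ) :
    newtonEnergy F (γ t) = newtonEnergy F (γ 0) := by
  have hE : ∀ s, HasDerivAt (fun u => newtonEnergy F (γ u)) 0 s := fun s => by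
    refine ((((hγ.hasDerivAt_snd s).pow 2).div_const 2).add
      ((hF _).comp s (hγ.hasDerivAt_fst s))).congr_deriv ?_
    norm_num
    ring
  exact is_const_of_deriv_eq_zero (fun s => (hE s).differentiableAt) (fun s => (hE s).deriv) t 0

lemma comp_const_sub (hγ : IsNewtonSolution f γ) (c : ℝ) :
    IsNewtonSolution f (fun t => ((γ (c - t)).1, -(γ (c - t)).2)) := fun t => by
  have h := (hγ (c - t)).comp_const_sub c t
  refine (((ContinuousLinearMap.fst ℝ ℝ ℝ).hasFDerivAt.comp_hasDerivAt t h).prodMk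
    ((ContinuousLinearMap.snd ℝ ℝ ℝ).hasFDerivAt.comp_hasDerivAt t h).neg).congr_deriv ?_
  simp [newtonField]

protected lemma neg (hγ : IsNewtonSolution f γ) : IsNewtonSolution (fun x => -f (-x)) (-γ) :=
  fun t => (hγ t).neg.congr_deriv (by simp [newtonField])

lemma reflect_eq_of_snd_eq_zero {S : Set ℝ} {K : ℝ≥0} (hf : LipschitzOnWith K f S)
    (hγ : IsNewtonSolution f γ) (hS : ∀ t, (γ t).1 ∈ S) {t₀ : ℝ} (h₀ : (γ t₀).2 = 0) (t : ℝ) :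
    γ (2 * t₀ - t) = ((γ t).1, -(γ t).2) := by
  have hrev : (fun t => ((γ (2 * t₀ - t)).1, -(γ (2 * t₀ - t)).2)) = γ :=
    ODE_solution_unique_univ (v := fun _ => newtonField f) (s := fun _ => Prod.fst ⁻¹' S)
      (t₀ := t₀) (fun _ => newtonField_lipschitzOnWith hf)
      (fun t => ⟨hγ.comp_const_sub (2 * t₀) t, hS _⟩) (fun t => ⟨hγ t, hS t⟩)
      (by ext <;> simp [h₀, two_mul])
  conv_rhs => rw [← hrev]
  simp

lemma abs_fst_lt (hF : ∀ x, HasDerivAt F (f x) x) (hγ : IsNewtonSolution f γ)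
    (h₀ : |(γ 0).1| < r) (hbarrier : ∀ x, |x| = r → newtonEnergy F (γ 0) < F x) (t : ℝ) :
    |(γ t).1| < r := by
  have hne : ∀ s ∈ univ, r - |(γ s).1| ≠ 0 := fun s _ hs => by
    have hlt := hbarrier _ (sub_eq_zero.1 hs).symm
    rw [← hγ.energy_eq hF s, newtonEnergy] at hlt
    linarith [sq_nonneg (γ s).2]
  have hcont : ContinuousOn (fun s => r - |(γ s).1|) univ := by
    have := hγ.continuous; fun_prop
  rcases isPreconnected_univ.forall_pos_or_forall_neg hcont hne with hpos | hneg
  · exact sub_pos.1 (hpos t trivial)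
  · exact absurd (hneg 0 trivial) (by linarith)

lemma not_forall_snd_pos (hκ : 0 < κ) (hsign : ∀ x, |x| ≤ r → κ * x ^ 2 ≤ x * f x)
    (hγ : IsNewtonSolution f γ) (hr : ∀ t, |(γ t).1| ≤ r) (t₀ : ℝ) :
    ¬ ∀ t ≥ t₀, 0 < (γ t).2 := by
  intro hy
  have hmono : StrictMonoOn (fun t => (γ t).1) (Ici t₀) :=
    strictMonoOn_of_hasDerivWithinAt_pos (convex_Ici t₀) hγ.continuous.fst.continuousOn
      (fun t _ => (hγ.hasDerivAt_fst t).hasDerivWithinAt)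
      (fun t ht => hy t (by rw [interior_Ici] at ht; exact ht.le))
  by_cases hx : ∃ a ≥ t₀, 0 ≤ (γ a).1
  · obtain ⟨a, ha, hxa⟩ := hx
    set c := (γ (a + 1)).1
    have hc : 0 < c := hxa.trans_lt (hmono ha (by simp only [mem_Ici]; linarith) (by linarith))
    have hforce : ∀ s ≥ a + 1, κ * c ≤ f (γ s).1 := fun s hs => by
      have hcs : c ≤ (γ s).1 := hmono.monotoneOn (by simp only [mem_Ici]; linarith)
        (by simp only [mem_Ici]; linarith) hs
      have hxs : 0 < (γ s).1 := hc.trans_le hcs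
      have hκx : κ * (γ s).1 ≤ f (γ s).1 :=
        le_of_mul_le_mul_left (by linarith [hsign _ (hr s)]) hxs
      exact (mul_le_mul_of_nonneg_left hcs hκ.le).trans hκx
    set b := a + 1 + (γ (a + 1)).2 / (κ * c)
    have hab : a + 1 ≤ b :=
      le_add_of_nonneg_right (by have := hy (a + 1) (by linarith); positivity)
    have hdecay := mul_sub_le_sub_of_le_hasDerivAt (u := fun s => -(γ s).2)
      (fun s => (hγ.hasDerivAt_snd s).neg) (fun s hs => by simpa using hforce s hs) hab
    have hb := hy b (by linarith)
    have : κ * c * (b - (a + 1)) = (γ (a + 1)).2 := by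
      simp only [b]; field_simp; ring
    linarith
  · push Not at hx
    -- while `x < 0` the force pushes `y` up, so `x` grows at least linearly
    have hvel : ∀ s ≥ t₀, (γ t₀).2 ≤ (γ s).2 := fun s hs => by
      have := mul_sub_le_sub_of_le_hasDerivAt (C := 0) hγ.hasDerivAt_snd (fun u hu => by
        have := hsign _ (hr u); have := hx u hu; nlinarith) hs
      linarith
    have hy₀ := hy t₀ le_rfl
    have hx₀ := hx t₀ le_rfl
    set b := t₀ - (γ t₀).1 / (γ t₀).2
    have hab : t₀ ≤ b := le_sub_self_iff _ |>.2 (div_nonpos_of_nonpos_of_nonneg hx₀.le hy₀.le)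
    have hgrowth := mul_sub_le_sub_of_le_hasDerivAt hγ.hasDerivAt_fst hvel hab
    have : (γ t₀).2 * (b - t₀) = -(γ t₀).1 := by
      simp only [b]; field_simp; ring
    linarith [hx b hab]

lemma exists_snd_eq_zero (hκ : 0 < κ) (hsign : ∀ x, |x| ≤ r → κ * x ^ 2 ≤ x * f x)
    (hγ : IsNewtonSolution f γ) (hr : ∀ t, |(γ t).1| ≤ r) (t₀ : ℝ) :
    ∃ t ≥ t₀, (γ t).2 = 0 := by
  by_contra! hne
  rcases isPreconnected_Ici.forall_pos_or_forall_neg hγ.continuous.snd.continuousOn hne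
    with hpos | hneg
  · exact hγ.not_forall_snd_pos hκ hsign hr t₀ hpos
  -- a solution with negative velocity is the point reflection of one with positive velocity
  · refine hγ.neg.not_forall_snd_pos (r := r) hκ (fun x hx => ?_) (fun t => ?_) t₀
      (fun t ht => neg_pos.2 (hneg t ht))
    · simpa using hsign (-x) (by rwa [abs_neg])
    · simpa using hr t

lemma exists_periodic {K : ℝ≥0} (hf : LipschitzOnWith K f (Icc (-r) r)) (hκ : 0 < κ)
    (hsign : ∀ x, |x| ≤ r → κ * x ^ 2 ≤ x * f x) (hγ : IsNewtonSolution f γ)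
    (hr : ∀ t, |(γ t).1| ≤ r) : ∃ T > 0, Periodic γ T := by
  obtain ⟨t₁, -, h₁⟩ := hγ.exists_snd_eq_zero hκ hsign hr 0
  obtain ⟨t₂, ht₂, h₂⟩ := hγ.exists_snd_eq_zero hκ hsign hr (t₁ + 1)
  have hS : ∀ t, (γ t).1 ∈ Icc (-r) r := fun t => abs_le.1 (hr t)
  refine ⟨2 * (t₂ - t₁), by linarith, periodic_of_reflect_eq (R := fun p => (p.1, -p.2))
    (fun p => by simp) (hγ.reflect_eq_of_snd_eq_zero hf hS h₁)
    (hγ.reflect_eq_of_snd_eq_zero hf hS h₂)⟩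

end IsNewtonSolution

def duffingForce (ε σ : ℝ) (m : ℕ) (x : ℝ) : ℝ := ε * x ^ m + σ * x

noncomputable def duffingPotential (ε σ : ℝ) (m : ℕ) (x : ℝ) : ℝ :=
  ε * x ^ (m + 1) / (m + 1) + σ * x ^ 2 / 2

section Duffing

variable {ε σ r x : ℝ} {m : ℕ}

lemma hasDerivAt_duffingPotential_s12 (x : ℝ) :
    HasDerivAt (duffingPotential ε σ m) (duffingForce ε σ m x) x := by
  refine ((((hasDerivAt_pow (m + 1) x).const_mul ε).div_const _).add
    (((hasDerivAt_pow 2 x).const_mul σ).div_const 2)).congr_deriv ?_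
  simp only [duffingForce, Nat.add_sub_cancel, Nat.cast_add, Nat.cast_one]
  field_simp
  ring

lemma abs_pow_le_mul_sq {n : ℕ} (hn : 3 ≤ n) (hr : r ≤ 1) (hx : |x| ≤ r) :
    |x ^ n| ≤ r * x ^ 2 := by
  obtain ⟨k, rfl⟩ := Nat.exists_eq_add_of_le' hn
  have hxk : |x| ^ (k + 1) ≤ r :=
    (pow_le_pow_left₀ (abs_nonneg x) hx _).trans
      (pow_le_of_le_one ((abs_nonneg x).trans hx) hr (Nat.succ_ne_zero k))
  calc |x ^ (k + 1 + 2)| = |x| ^ (k + 1) * x ^ 2 := by rw [abs_pow, pow_add, sq_abs]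
    _ ≤ r * x ^ 2 := by gcongr

lemma abs_mul_pow_succ_le (hm : 1 < m) (hr : r ≤ 1) (hεr : |ε| * r ≤ σ / 4) (hx : |x| ≤ r) :
    |ε * x ^ (m + 1)| ≤ σ / 4 * x ^ 2 :=
  calc |ε * x ^ (m + 1)| ≤ |ε| * (r * x ^ 2) := by
        rw [abs_mul]; gcongr; exact abs_pow_le_mul_sq (by omega) hr hx
    _ ≤ σ / 4 * x ^ 2 := by rw [← mul_assoc]; gcongr

lemma mul_duffingForce_ge (hm : 1 < m) (hr : r ≤ 1) (hεr : |ε| * r ≤ σ / 4) (hx : |x| ≤ r) :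
    3 * σ / 4 * x ^ 2 ≤ x * duffingForce ε σ m x := by
  have := neg_abs_le (ε * x ^ (m + 1))
  have := abs_mul_pow_succ_le hm hr hεr hx
  simp only [duffingForce]
  linarith [show x * (ε * x ^ m + σ * x) = ε * x ^ (m + 1) + σ * x ^ 2 by ring]

lemma duffingPotential_ge (hm : 1 < m) (hr : r ≤ 1) (hεr : |ε| * r ≤ σ / 4) (hx : |x| ≤ r) :
    σ / 4 * x ^ 2 ≤ duffingPotential ε σ m x := by
  have hdiv : |ε * x ^ (m + 1) / (m + 1)| ≤ |ε * x ^ (m + 1)| := by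
    rw [abs_div, abs_of_pos (by positivity : (0 : ℝ) < m + 1)]
    exact div_le_self (abs_nonneg _) (by linarith [(Nat.cast_nonneg m : (0 : ℝ) ≤ m)])
  have := neg_abs_le (ε * x ^ (m + 1) / (m + 1))
  have := abs_mul_pow_succ_le hm hr hεr hx
  simp only [duffingPotential]
  linarith

end Duffing

theorem duffing_center_general (ε σ : ℝ) (hσ : 0 < σ)
    (m : ℕ) (hm : 1 < m) :
    ∃ δ : ℝ, 0 < δ ∧ ∀ γ : ℝ → ℝ × ℝ,
      (∀ t : ℝ, HasDerivAt γ
        ((γ t).2, -ε * (γ t).1 ^ m - σ * (γ t).1) t) →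
      0 < ‖γ 0‖ → ‖γ 0‖ < δ →
      ∃ T : ℝ, 0 < T ∧ ∀ t : ℝ, γ (t + T) = γ t := by
  obtain ⟨r, hr₀, hr₁, hεr⟩ : ∃ r > 0, r ≤ 1 ∧ |ε| * r ≤ σ / 4 := by
    refine ⟨σ / (4 * (|ε| + σ)), by positivity,
      (div_le_one (by positivity)).2 (by linarith [abs_nonneg ε]), ?_⟩
    rw [← mul_div_assoc, div_le_div_iff₀ (by positivity) (by norm_num)]
    nlinarith [abs_nonneg ε]
  set E := newtonEnergy (duffingPotential ε σ m)
  have hE : Continuous E := by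
    show Continuous fun p : ℝ × ℝ => p.2 ^ 2 / 2 + duffingPotential ε σ m p.1
    unfold duffingPotential; fun_prop
  obtain ⟨δ, hδ, hsmall⟩ :
      ∃ δ > 0, Metric.ball 0 δ ⊆ {p : ℝ × ℝ | |p.1| < r} ∩ {p | E p < σ / 4 * r ^ 2} :=
    Metric.isOpen_iff.1 ((isOpen_lt (by fun_prop) continuous_const).inter
      (isOpen_lt hE continuous_const)) 0
      ⟨by simpa, by simp [E, newtonEnergy, duffingPotential]; positivity⟩
  refine ⟨δ, hδ, fun γ hγ _ hγδ => ?_⟩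
  have hsol : IsNewtonSolution (duffingForce ε σ m) γ :=
    fun t => (hγ t).congr_deriv (by simp only [newtonField, duffingForce]; ring_nf)
  obtain ⟨h₀, hE₀⟩ := hsmall (mem_ball_zero_iff.2 hγδ)
  have hbarrier : ∀ x, |x| = r → E (γ 0) < duffingPotential ε σ m x := fun x hx => by
    have := duffingPotential_ge hm hr₁ hεr hx.le
    rw [← sq_abs x, hx] at this
    exact hE₀.trans_le this
  have hconf : ∀ t, |(γ t).1| ≤ r :=
    fun t => (hsol.abs_fst_lt hasDerivAt_duffingPotential_s12 h₀ hbarrier t).le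
  have hC1 : ContDiff ℝ 1 (duffingForce ε σ m) := by unfold duffingForce; fun_prop
  obtain ⟨K, hK⟩ :=
    hC1.contDiffOn.exists_lipschitzOnWith one_ne_zero (convex_Icc (-r) r) isCompact_Icc
  exact hsol.exists_periodic hK (by positivity : 0 < 3 * σ / 4)
    (fun x hx => mul_duffingForce_ge hm hr₁ hεr hx) hconf

/-- For `m > 1`, `α = 0` and `σ > 0`, the origin is a center of the
generalized Duffing system: all sufficiently small nontrivial global solutions
are periodic. -/
theorem duffing_center (α ε σ : ℝ) (hε : ε ≠ 0) (hα : α = 0) (hσ : 0 < σ)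
    (m : ℕ) (hm : 1 < m) :
    ∃ δ : ℝ, 0 < δ ∧ ∀ γ : ℝ → ℝ × ℝ,
      (∀ t : ℝ, HasDerivAt γ
        ((γ t).2, -ε * (γ t).1 ^ m - σ * (γ t).1) t) →
      0 < ‖γ 0‖ → ‖γ 0‖ < δ →
      ∃ T : ℝ, 0 < T ∧ ∀ t : ℝ, γ (t + T) = γ t :=
  duffing_center_general ε σ hσ m hm
end
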